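/- Let f(x) = sign(wᵀx + b) with w ≠ 0, cost c(x, x') = α‖x' − x‖₂² (α > 0), and best response Δ_f(x) = argmax_{x'} (f(x') − c(x, x')) with f ∈ {−1, 1}. Then Δ_f(x) ≠ x if and only if f(x) = −1 and α · (wᵀx + b)² / ‖w‖₂² < 2. Equivalently, exactly the negatively classified points within Euclidean distance √(2/α) of the hyperplane move. -/

import Mathlib

/-!
A point that is already classified positively cannot gain anything, since `f ≤ 1` and costs are
nonnegative. A negatively classified point gains 2 by reaching the closed half-space
`⟪w, ·⟫ + b ≥ 0`, and by Cauchy–Schwarz the cheapest way to do so is its orthogonal projection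
onto the hyperplane, at squared distance `(⟪w, x⟫ + b)² / ‖w‖²`. So it moves exactly when
`α` times this squared distance is below 2.
-/

open scoped RealInnerProductSpace

theorem bestResponse_eq_self_iff {X : Type*} (u : X → X → ℝ) (Δ : X → X)
    (hmax : ∀ x x', u x x' ≤ u x (Δ x)) (htie : ∀ x, (∀ x', u x x' ≤ u x x) → Δ x = x) (x : X) :
    Δ x = x ↔ ∀ x', u x x' ≤ u x x :=
  ⟨fun h x' => by simpa only [h] using hmax x x', htie x⟩

section Hyperplane

variable {E : Type*} [NormedAddCommGroup E] [InnerProductSpace ℝ E]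

noncomputable def hyperplaneFoot (w : E) (b : ℝ) (x : E) : E :=
  x - ((⟪w, x⟫ + b) / ‖w‖ ^ 2) • w

theorem inner_hyperplaneFoot_add {w : E} (hw : w ≠ 0) (b : ℝ) (x : E) :
    ⟪w, hyperplaneFoot w b x⟫ + b = 0 := by
  have hw2 : ‖w‖ ^ 2 ≠ 0 := by positivity
  rw [hyperplaneFoot, inner_sub_right, real_inner_smul_right, real_inner_self_eq_norm_sq,
    div_mul_cancel₀ _ hw2]
  ring

theorem norm_hyperplaneFoot_sub_sq (w : E) (b : ℝ) (x : E) :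
    ‖hyperplaneFoot w b x - x‖ ^ 2 = (⟪w, x⟫ + b) ^ 2 / ‖w‖ ^ 2 := by
  rw [hyperplaneFoot, sub_sub_cancel_left, norm_neg, norm_smul, mul_pow, Real.norm_eq_abs,
    sq_abs, div_pow]
  rcases eq_or_ne w 0 with rfl | hw
  · simp
  · field_simp

/-- Cauchy–Schwarz: no point of the half-space `⟪w, ·⟫ + b ≥ 0` is closer to `x` than the foot
of `x` on its boundary. -/
theorem sq_div_norm_sq_le_norm_sub_sq {w x y : E} {b : ℝ} (hx : ⟪w, x⟫ + b < 0)
    (hy : 0 ≤ ⟪w, y⟫ + b) : (⟪w, x⟫ + b) ^ 2 / ‖w‖ ^ 2 ≤ ‖y - x‖ ^ 2 := by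
  have hgap : -(⟪w, x⟫ + b) ≤ ‖y - x‖ * ‖w‖ :=
    calc -(⟪w, x⟫ + b) ≤ ⟪w, y - x⟫ := by rw [inner_sub_right]; linarith
      _ ≤ ‖w‖ * ‖y - x‖ := real_inner_le_norm _ _
      _ = ‖y - x‖ * ‖w‖ := mul_comm _ _
  refine div_le_of_le_mul₀ (by positivity) (by positivity) ?_
  calc (⟪w, x⟫ + b) ^ 2 = (-(⟪w, x⟫ + b)) ^ 2 := (neg_sq _).symm
    _ ≤ (‖y - x‖ * ‖w‖) ^ 2 := pow_le_pow_left₀ (by linarith) hgap 2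
    _ = ‖y - x‖ ^ 2 * ‖w‖ ^ 2 := mul_pow _ _ _

end Hyperplane

section LinearSign

variable {E : Type*} [NormedAddCommGroup E] [InnerProductSpace ℝ E] {w x : E} {b : ℝ}

noncomputable def linearSign (w : E) (b : ℝ) (x : E) : ℝ :=
  if 0 ≤ ⟪w, x⟫ + b then 1 else -1

theorem linearSign_of_nonneg (h : 0 ≤ ⟪w, x⟫ + b) : linearSign w b x = 1 := if_pos h

theorem linearSign_of_neg (h : ⟪w, x⟫ + b < 0) : linearSign w b x = -1 := if_neg h.not_ge

theorem linearSign_le_one (w : E) (b : ℝ) (x : E) : linearSign w b x ≤ 1 := by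
  unfold linearSign; split_ifs <;> norm_num

theorem linearSign_eq_neg_one_iff : linearSign w b x = -1 ↔ ⟪w, x⟫ + b < 0 := by
  unfold linearSign; split_ifs with h <;> norm_num [h]; linarith

theorem forall_linearSign_sub_le_iff (hw : w ≠ 0) {α : ℝ} (hα : 0 ≤ α) :
    (∀ y, linearSign w b y - α * ‖y - x‖ ^ 2 ≤ linearSign w b x) ↔
      ¬(linearSign w b x = -1 ∧ α * (⟪w, x⟫ + b) ^ 2 / ‖w‖ ^ 2 < 2) := by
  rw [linearSign_eq_neg_one_iff, mul_div_assoc]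
  constructor
  · rintro hstay ⟨hx, hlt⟩
    have hgain := hstay (hyperplaneFoot w b x)
    rw [linearSign_of_nonneg (inner_hyperplaneFoot_add hw b x).ge, linearSign_of_neg hx,
      norm_hyperplaneFoot_sub_sq] at hgain
    linarith
  · intro hfar y
    have hcost : 0 ≤ α * ‖y - x‖ ^ 2 := by positivity
    rcases le_or_gt 0 (⟪w, x⟫ + b) with hx | hx
    · linarith [linearSign_of_nonneg hx, linearSign_le_one w b y]
    rcases le_or_gt 0 (⟪w, y⟫ + b) with hy | hy
    · have hdist := mul_le_mul_of_nonneg_left (sq_div_norm_sq_le_norm_sub_sq hx hy) hα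
      linarith [linearSign_of_nonneg hy, linearSign_of_neg hx, not_lt.mp fun h => hfar ⟨hx, h⟩]
    · linarith [linearSign_of_neg hy, linearSign_of_neg hx]

end LinearSign

/-- Exactly the negatively classified points whose minimal cost to the hyperplane is below 2
move: `Δ_f(x) ≠ x ↔ (f(x) = −1 ∧ α (wᵀx + b)²/‖w‖² < 2)`. -/
theorem stmt_7 {d : ℕ} (w : EuclideanSpace ℝ (Fin d)) (b : ℝ) (α : ℝ)
    (hw : w ≠ 0) (hα : 0 < α)
    (f : EuclideanSpace ℝ (Fin d) → ℝ)
    (hf : ∀ x, f x = if 0 ≤ ⟪w, x⟫ + b then (1 : ℝ) else -1)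
    (c : EuclideanSpace ℝ (Fin d) → EuclideanSpace ℝ (Fin d) → ℝ)
    (hc : ∀ x x', c x x' = α * ‖x' - x‖ ^ 2)
    (Δ : EuclideanSpace ℝ (Fin d) → EuclideanSpace ℝ (Fin d))
    -- Δ x attains the maximum of x' ↦ f x' − c x x'
    (hmax : ∀ x x', f x' - c x x' ≤ f (Δ x) - c x (Δ x))
    -- ties are broken in favor of not moving
    (htie : ∀ x, (∀ x', f x' - c x x' ≤ f x - c x x) → Δ x = x) :
    ∀ x, Δ x ≠ x ↔ (f x = -1 ∧ α * (⟪w, x⟫ + b) ^ 2 / ‖w‖ ^ 2 < 2) := by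
  intro x
  obtain rfl : f = linearSign w b := funext hf
  obtain rfl : c = fun x x' => α * ‖x' - x‖ ^ 2 := funext fun x => funext (hc x)
  rw [Ne, bestResponse_eq_self_iff (fun x x' => linearSign w b x' - α * ‖x' - x‖ ^ 2) Δ hmax
    htie x]
  simp only [sub_self, norm_zero, ne_eq, OfNat.ofNat_ne_zero, not_false_eq_true, zero_pow,
    mul_zero, sub_zero]
  rw [forall_linearSign_sub_le_iff hw hα.le, not_not]
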